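/- arXiv:1508.01759 — 2 statements merged into one kernel-verified Lean document; each statement's English description precedes it below -/
import Mathlib

section
/- Let G be a connected triangle-free graph with chromatic number k ≥ 3, let H = G ⊠ K₂ be the graph on vertex set V(G) × {0,1} in which (u,i) and (v,j) are adjacent iff (u = v and i ≠ j) or u and v are adjacent in G, and fix a vertex v₁ of G. Let F be the graph obtained from three vertex-disjoint copies H¹, H², H³ of H by identifying (v₁,0) of H¹ with (v₁,1) of H², identifying (v₁,0) of H² with (v₁,1) of H³, and identifying (v₁,0) of H³ with (v₁,1) of H¹. Then F is K₃-WORM colorable and W^-(F) = k. -/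
open SimpleGraph

/-- A K₃-WORM coloring of `G`: every triangle receives exactly two colors. -/
def IsWormColoring {V : Type*} (G : SimpleGraph V) (c : V → ℕ) : Prop :=
  ∀ u v w : V, G.Adj u v → G.Adj u w → G.Adj v w → ({c u, c v, c w} : Finset ℕ).card = 2

/-- The number of colors used by a coloring of a finite vertex set. -/
def colorsUsed {V : Type*} [Fintype V] (c : V → ℕ) : ℕ := (Finset.univ.image c).card

/-- The K₃-WORM feasible set of `G`: the set of `s` such that `G` has a
K₃-WORM coloring using exactly `s` colors. -/
def wormFeasible {V : Type*} [Fintype V] (G : SimpleGraph V) : Set ℕ :=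
  {s | ∃ c : V → ℕ, IsWormColoring G c ∧ colorsUsed c = s}

/-- `G` is triangle-free: it has no three pairwise adjacent vertices. -/
def TriangleFree {V : Type*} (G : SimpleGraph V) : Prop :=
  ∀ u v w : V, G.Adj u v → G.Adj u w → G.Adj v w → False

/-- The strong product `G ⊠ K₂`, on vertex set `V × Bool`:
`(u,i)` and `(v,j)` are adjacent iff (`u = v` and `i ≠ j`) or `u`,`v` are adjacent in `G`. -/
def strongProdK2 {V : Type*} (G : SimpleGraph V) : SimpleGraph (V × Bool) :=
  SimpleGraph.fromRel (fun p q => (p.1 = q.1 ∧ p.2 ≠ q.2) ∨ G.Adj p.1 q.1)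

/-- Representative map for the identifications
`x¹₁ = y²₁`, `x²₁ = y³₁`, `x³₁ = y¹₁` on three disjoint copies of `G ⊠ K₂`:
copy `i`'s vertex `(v₁, 1)` is identified with copy `i-1`'s vertex `(v₁, 0)`
(so that `(v₁,0)` of copy `i` equals `(v₁,1)` of copy `i+1`). -/
def rep {V : Type*} [DecidableEq V] (v₁ : V) (p : Fin 3 × V × Bool) : Fin 3 × V × Bool :=
  if p.2.1 = v₁ ∧ p.2.2 = true then (p.1 - 1, v₁, false) else p

/-- The graph `F` obtained from three vertex-disjoint copies of `H = G ⊠ K₂` by the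
three identifications `x¹₁ = y²₁`, `x²₁ = y³₁`, `x³₁ = y¹₁`: vertices are the
representatives, and two vertices are adjacent iff they have preimages in a common copy
of `H` that are adjacent in `H`. -/
def tripleGlue {V : Type*} [DecidableEq V] (G : SimpleGraph V) (v₁ : V) :
    SimpleGraph {p : Fin 3 × V × Bool // rep v₁ p = p} :=
  SimpleGraph.fromRel (fun q q' => ∃ (i : Fin 3) (a b : V × Bool),
    rep v₁ (i, a) = q.val ∧ rep v₁ (i, b) = q'.val ∧ (strongProdK2 G).Adj a b)

/-!
Since `G` is triangle-free, every triangle of `G ⊠ K₂` consists of the two layers `(u,0), (u,1)`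
of a vertex `u` together with one vertex `(v,j)`, `uv ∈ E(G)`. So in a K₃-WORM coloring of
`G ⊠ K₂`, if the two layers of `u` share a color then so do the two layers of every neighbour of
`u`; by connectivity this holds everywhere, and then one layer is properly colored, with at least
`χ(G) = k` colors. In `F` the three glued vertices form a triangle, so two of them share a color,
and these two are the layers of `v₁` in one copy of `G ⊠ K₂`: that copy already needs `k` colors.

Conversely, every triangle of `F` lies in one copy or is the triangle of glued vertices. Color
one copy by a proper `k`-coloring of `G` (the same on both layers) and each other copy by two
colors, one per layer, arranged so that the colorings agree at the glued vertices.
-/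

open Finset

section

variable {V : Type*} {G : SimpleGraph V}

theorem strongProdK2_adj {a b : V × Bool} :
    (strongProdK2 G).Adj a b ↔ (a.1 = b.1 ∧ a.2 ≠ b.2) ∨ G.Adj a.1 b.1 := by
  rw [strongProdK2, fromRel_adj]
  constructor
  · rintro ⟨-, h | ⟨h₁, h₂⟩ | h⟩
    · exact h
    · exact Or.inl ⟨h₁.symm, Ne.symm h₂⟩
    · exact Or.inr h.symm
  · intro h
    refine ⟨?_, Or.inl h⟩
    rintro rfl
    simp at h

theorem strongProdK2_adj_layers (u : V) : (strongProdK2 G).Adj (u, false) (u, true) :=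
  strongProdK2_adj.2 (Or.inl ⟨rfl, Bool.false_ne_true⟩)

theorem strongProdK2_adj_of_adj {u v : V} (h : G.Adj u v) (s t : Bool) :
    (strongProdK2 G).Adj (u, s) (v, t) :=
  strongProdK2_adj.2 (Or.inr h)

theorem strongProdK2_triangle [DecidableEq V] (htf : TriangleFree G) {a b c : V × Bool}
    (hab : (strongProdK2 G).Adj a b) (hac : (strongProdK2 G).Adj a c)
    (hbc : (strongProdK2 G).Adj b c) :
    ∃ u v j, G.Adj u v ∧ ({a, b, c} : Finset (V × Bool)) = {(u, false), (u, true), (v, j)} := by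
  obtain ⟨u, s⟩ := a
  obtain ⟨w, t⟩ := b
  obtain ⟨x, r⟩ := c
  simp only [strongProdK2_adj] at hab hac hbc
  rcases hab with ⟨rfl, hst⟩ | hab <;> rcases hac with ⟨rfl, hsr⟩ | hac <;>
    rcases hbc with ⟨hwx, htr⟩ | hbc <;> subst_vars
  · cases s <;> cases t <;> cases r <;> simp_all
  · exact (G.irrefl hbc).elim
  · exact (G.irrefl hac).elim
  · exact ⟨u, x, r, hac, by ext; cases s <;> cases t <;> simp_all [or_left_comm]⟩
  · exact (G.irrefl hab).elim
  · exact ⟨u, w, t, hab, by ext; cases s <;> cases r <;> simp_all <;> tauto⟩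
  · exact ⟨x, u, s, hab.symm, by ext; cases t <;> cases r <;> simp_all <;> tauto⟩
  · exact (htf _ _ _ hab hac hbc).elim

theorem isWormColoring_strongProdK2_of_forall_adj [DecidableEq V] (htf : TriangleFree G) {d : V × Bool → ℕ}
    (hd : ∀ u v j, G.Adj u v → #{d (u, false), d (u, true), d (v, j)} = 2) :
    IsWormColoring (strongProdK2 G) d := by
  intro a b c hab hac hbc
  obtain ⟨u, v, j, huv, he⟩ := strongProdK2_triangle htf hab hac hbc
  have himage := congrArg (Finset.image d) he
  simp only [Finset.image_insert, Finset.image_singleton] at himage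
  rw [himage]
  exact hd u v j huv

theorem isWormColoring_strongProdK2_comp_fst [DecidableEq V] (htf : TriangleFree G)
    (C : G.Coloring ℕ) : IsWormColoring (strongProdK2 G) (fun a => C a.1) :=
  isWormColoring_strongProdK2_of_forall_adj htf fun u v _ huv => by simp [card_pair (C.valid huv)]

theorem isWormColoring_strongProdK2_cond [DecidableEq V] (htf : TriangleFree G) {x y : ℕ}
    (hxy : x ≠ y) : IsWormColoring (strongProdK2 G) (fun a => cond a.2 x y) :=
  isWormColoring_strongProdK2_of_forall_adj htf fun u v j _ => by
    cases j <;> simp [card_pair hxy, card_pair hxy.symm]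

theorem IsWormColoring.layers_eq_of_adj {d : V × Bool → ℕ}
    (hd : IsWormColoring (strongProdK2 G) d) {u v : V} (huv : G.Adj u v)
    (hu : d (u, false) = d (u, true)) : d (v, false) = d (v, true) := by
  have h₀ := hd _ _ (v, false) (strongProdK2_adj_layers u) (strongProdK2_adj_of_adj huv _ _)
    (strongProdK2_adj_of_adj huv _ _)
  have h₁ := hd _ _ (v, true) (strongProdK2_adj_layers u) (strongProdK2_adj_of_adj huv _ _)
    (strongProdK2_adj_of_adj huv _ _)
  have h₂ := hd _ _ (u, false) (strongProdK2_adj_layers v) (strongProdK2_adj_of_adj huv.symm _ _)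
    (strongProdK2_adj_of_adj huv.symm _ _)
  rw [hu] at h₀ h₁ h₂
  by_contra hv
  simp only [insert_idem] at h₀ h₁
  have hx : d (u, true) ≠ d (v, false) := fun h => by simp [h] at h₀
  have hy : d (u, true) ≠ d (v, true) := fun h => by simp [h] at h₁
  rw [card_insert_of_notMem (by simp [hv, hx.symm]), card_pair hy.symm] at h₂
  omega

theorem colorsUsed_comp_le {α β : Type*} [Fintype α] [Fintype β] (c : β → ℕ) (g : α → β) :
    colorsUsed (c ∘ g) ≤ colorsUsed c := by
  classical
  exact card_le_card fun x hx => by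
    obtain ⟨a, -, rfl⟩ := mem_image.1 hx
    exact mem_image_of_mem c (mem_univ (g a))

theorem SimpleGraph.Coloring.chromaticNumber_le_colorsUsed [Fintype V] (C : G.Coloring ℕ) :
    G.chromaticNumber ≤ colorsUsed C := by
  let C' : G.Coloring (univ.image C) :=
    Coloring.mk (fun v => ⟨C v, mem_image_of_mem C (mem_univ v)⟩)
      fun huv e => C.valid huv (congrArg Subtype.val e)
  simpa [colorsUsed] using C'.colorable.chromaticNumber_le

theorem IsWormColoring.chromaticNumber_le_colorsUsed_strongProdK2 [Fintype V] {d : V × Bool → ℕ}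
    (hd : IsWormColoring (strongProdK2 G) d) (hG : G.Preconnected) {v : V}
    (hv : d (v, false) = d (v, true)) : G.chromaticNumber ≤ colorsUsed d := by
  have hlayers (u : V) : d (u, false) = d (u, true) := by
    obtain ⟨p⟩ := hG v u
    clear hG
    induction p with
    | nil => exact hv
    | cons h _ ih => exact ih (hd.layers_eq_of_adj h hv)
  let C : G.Coloring ℕ := Coloring.mk (fun u => d (u, false)) fun {u w} huw e => by
    have h := hd _ _ (w, false) (strongProdK2_adj_layers u) (strongProdK2_adj_of_adj huw _ _)
      (strongProdK2_adj_of_adj huw _ _)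
    simp [← hlayers u, e] at h
  exact C.chromaticNumber_le_colorsUsed.trans (by exact_mod_cast colorsUsed_comp_le d _)

section Glue

variable [DecidableEq V] {v₁ : V}

theorem rep_of_ne {m : Fin 3} {a : V × Bool} (h : a ≠ (v₁, true)) : rep v₁ (m, a) = (m, a) :=
  if_neg fun ⟨h₁, h₂⟩ => h (Prod.ext h₁ h₂)

theorem rep_top (m : Fin 3) : rep v₁ (m, v₁, true) = (m - 1, v₁, false) :=
  if_pos ⟨rfl, rfl⟩

theorem rep_rep (p : Fin 3 × V × Bool) : rep v₁ (rep v₁ p) = rep v₁ p := by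
  unfold rep
  split_ifs <;> simp_all

variable (v₁) in
def copyVertex (m : Fin 3) (a : V × Bool) : {p : Fin 3 × V × Bool // rep v₁ p = p} :=
  ⟨rep v₁ (m, a), rep_rep _⟩

variable (v₁) in
def gluedVertex (m : Fin 3) : {p : Fin 3 × V × Bool // rep v₁ p = p} :=
  copyVertex v₁ m (v₁, false)

theorem copyVertex_top (m : Fin 3) : copyVertex v₁ m (v₁, true) = gluedVertex v₁ (m - 1) :=
  Subtype.ext <| (rep_top m).trans (rep_of_ne (by simp)).symm

theorem copyVertex_eq_copyVertex {i j : Fin 3} {a b : V × Bool}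
    (h : copyVertex v₁ i a = copyVertex v₁ j b) :
    (i = j ∧ a = b) ∨ (i ≠ j ∧ a.1 = v₁ ∧ b.1 = v₁ ∧ a.2 ≠ b.2) := by
  obtain ⟨u, s⟩ := a
  obtain ⟨w, t⟩ := b
  have h := congrArg Subtype.val h
  simp only [copyVertex, rep] at h
  split_ifs at h <;> simp_all
  rintro rfl
  exact (by decide : ∀ m : Fin 3, m - 1 ≠ m) _ h.1

theorem copyVertex_injective (m : Fin 3) : Function.Injective (copyVertex v₁ m) := fun a b h => by
  rcases copyVertex_eq_copyVertex h with ⟨-, hab⟩ | ⟨hm, -⟩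
  · exact hab
  · exact absurd rfl hm

theorem tripleGlue_adj {q q' : {p : Fin 3 × V × Bool // rep v₁ p = p}} :
    (tripleGlue G v₁).Adj q q' ↔ q ≠ q' ∧ ∃ m a b, (strongProdK2 G).Adj a b ∧
      copyVertex v₁ m a = q ∧ copyVertex v₁ m b = q' := by
  simp only [tripleGlue, fromRel_adj, Subtype.ext_iff, copyVertex]
  constructor
  · rintro ⟨hne, ⟨m, a, b, ha, hb, hab⟩ | ⟨m, a, b, ha, hb, hab⟩⟩
    · exact ⟨hne, m, a, b, hab, ha, hb⟩
    · exact ⟨hne, m, b, a, hab.symm, hb, ha⟩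
  · rintro ⟨hne, m, a, b, hab, ha, hb⟩
    exact ⟨hne, Or.inl ⟨m, a, b, ha, hb, hab⟩⟩

theorem copyVertex_adj_copyVertex {m : Fin 3} {a b : V × Bool} :
    (tripleGlue G v₁).Adj (copyVertex v₁ m a) (copyVertex v₁ m b) ↔
      (strongProdK2 G).Adj a b := by
  rw [tripleGlue_adj]
  constructor
  · rintro ⟨hne, i, a', b', hab', ha, hb⟩
    by_cases him : i = m
    · subst him
      rwa [← copyVertex_injective i ha, ← copyVertex_injective i hb]
    · obtain ⟨-, -, ha₁, -⟩ := (copyVertex_eq_copyVertex ha).resolve_left fun h => him h.1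
      obtain ⟨-, -, hb₁, -⟩ := (copyVertex_eq_copyVertex hb).resolve_left fun h => him h.1
      have hab₁ : a.1 = b.1 := ha₁.trans hb₁.symm
      exact strongProdK2_adj.2 (Or.inl ⟨hab₁, fun hab₂ => hne (by rw [Prod.ext hab₁ hab₂])⟩)
  · intro hab
    exact ⟨fun h => hab.ne (copyVertex_injective m h), m, a, b, hab, rfl, rfl⟩

theorem gluedVertex_adj {i j : Fin 3} (h : i ≠ j) :
    (tripleGlue G v₁).Adj (gluedVertex v₁ i) (gluedVertex v₁ j) := by
  have hpred (m : Fin 3) : (tripleGlue G v₁).Adj (gluedVertex v₁ m) (gluedVertex v₁ (m - 1)) := by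
    rw [gluedVertex, ← copyVertex_top]
    exact copyVertex_adj_copyVertex.2 (strongProdK2_adj_layers v₁)
  obtain rfl | rfl : j = i - 1 ∨ i = j - 1 := by revert i j; decide
  · exact hpred i
  · exact (hpred j).symm

theorem exists_eq_gluedVertex {q : {p : Fin 3 × V × Bool // rep v₁ p = p}} {i j : Fin 3}
    (hij : i ≠ j) (hi : q ∈ Set.range (copyVertex v₁ i)) (hj : q ∈ Set.range (copyVertex v₁ j)) :
    ∃ n, q = gluedVertex v₁ n := by
  obtain ⟨⟨u, s⟩, rfl⟩ := hi
  obtain ⟨b, hb⟩ := hj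
  rcases copyVertex_eq_copyVertex hb with ⟨h, -⟩ | ⟨-, -, rfl, -⟩
  · exact absurd h.symm hij
  · cases s
    · exact ⟨i, rfl⟩
    · exact ⟨i - 1, copyVertex_top i⟩

theorem exists_mem_range_copyVertex_of_adj {q q' : {p : Fin 3 × V × Bool // rep v₁ p = p}}
    (h : (tripleGlue G v₁).Adj q q') :
    ∃ m, q ∈ Set.range (copyVertex v₁ m) ∧ q' ∈ Set.range (copyVertex v₁ m) := by
  obtain ⟨-, m, a, b, -, rfl, rfl⟩ := tripleGlue_adj.1 h
  exact ⟨m, ⟨a, rfl⟩, ⟨b, rfl⟩⟩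

theorem tripleGlue_triangle {q₁ q₂ q₃ : {p : Fin 3 × V × Bool // rep v₁ p = p}}
    (h₁₂ : (tripleGlue G v₁).Adj q₁ q₂) (h₁₃ : (tripleGlue G v₁).Adj q₁ q₃)
    (h₂₃ : (tripleGlue G v₁).Adj q₂ q₃) :
    (∃ m a b c, (strongProdK2 G).Adj a b ∧ (strongProdK2 G).Adj a c ∧
      (strongProdK2 G).Adj b c ∧
      q₁ = copyVertex v₁ m a ∧ q₂ = copyVertex v₁ m b ∧ q₃ = copyVertex v₁ m c) ∨
    ({q₁, q₂, q₃} : Finset _) = {gluedVertex v₁ 0, gluedVertex v₁ 1, gluedVertex v₁ 2} := by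
  suffices (∃ m, q₁ ∈ Set.range (copyVertex v₁ m) ∧ q₂ ∈ Set.range (copyVertex v₁ m) ∧
      q₃ ∈ Set.range (copyVertex v₁ m)) ∨
      ∀ q ∈ ({q₁, q₂, q₃} : Finset _), ∃ n, q = gluedVertex v₁ n by
    rcases this with ⟨m, ⟨a, rfl⟩, ⟨b, rfl⟩, ⟨c, rfl⟩⟩ | hglued
    · exact Or.inl ⟨m, a, b, c, copyVertex_adj_copyVertex.1 h₁₂,
        copyVertex_adj_copyVertex.1 h₁₃, copyVertex_adj_copyVertex.1 h₂₃, rfl, rfl, rfl⟩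
    · refine Or.inr (eq_of_subset_of_card_le (fun q hq => ?_) ?_)
      · obtain ⟨n, rfl⟩ := hglued q hq
        fin_cases n <;> simp
      · rw [card_eq_three.2 ⟨q₁, q₂, q₃, h₁₂.ne, h₁₃.ne, h₂₃.ne, rfl⟩]
        exact card_le_three
  obtain ⟨i, hi₁, hi₂⟩ := exists_mem_range_copyVertex_of_adj h₁₂
  obtain ⟨j, hj₁, hj₃⟩ := exists_mem_range_copyVertex_of_adj h₁₃
  obtain ⟨l, hl₂, hl₃⟩ := exists_mem_range_copyVertex_of_adj h₂₃
  by_cases hij : i = j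
  · exact Or.inl ⟨i, hi₁, hi₂, hij ▸ hj₃⟩
  by_cases hil : i = l
  · exact Or.inl ⟨i, hi₁, hi₂, hil ▸ hl₃⟩
  by_cases hjl : j = l
  · exact Or.inl ⟨j, hj₁, hjl ▸ hl₂, hj₃⟩
  right
  simp only [mem_insert, mem_singleton, forall_eq_or_imp, forall_eq]
  exact ⟨exists_eq_gluedVertex hij hi₁ hj₁, exists_eq_gluedVertex hil hi₂ hl₂,
    exists_eq_gluedVertex hjl hj₃ hl₃⟩

theorem isWormColoring_tripleGlue_iff {c : {p : Fin 3 × V × Bool // rep v₁ p = p} → ℕ} :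
    IsWormColoring (tripleGlue G v₁) c ↔
      (∀ m, IsWormColoring (strongProdK2 G) (c ∘ copyVertex v₁ m)) ∧
        #{c (gluedVertex v₁ 0), c (gluedVertex v₁ 1), c (gluedVertex v₁ 2)} = 2 := by
  constructor
  · intro hc
    refine ⟨fun m a b d hab had hbd => hc _ _ _ (copyVertex_adj_copyVertex.2 hab)
      (copyVertex_adj_copyVertex.2 had) (copyVertex_adj_copyVertex.2 hbd), ?_⟩
    exact hc _ _ _ (gluedVertex_adj (by decide)) (gluedVertex_adj (by decide))
      (gluedVertex_adj (by decide))
  · rintro ⟨hcopy, hglued⟩ q₁ q₂ q₃ h₁₂ h₁₃ h₂₃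
    rcases tripleGlue_triangle h₁₂ h₁₃ h₂₃ with ⟨m, a, b, d, hab, had, hbd, rfl, rfl, rfl⟩ | h
    · exact hcopy m a b d hab had hbd
    · have himage := congrArg (image c) h
      simp only [image_insert, image_singleton] at himage
      rwa [himage]

theorem exists_apply_eq_apply_sub_one_of_card_eq_two {α : Type*} [DecidableEq α] {x : Fin 3 → α}
    (h : #{x 0, x 1, x 2} = 2) : ∃ m, x m = x (m - 1) := by
  by_contra! hne
  have h₀ : x 0 ≠ x 2 := hne 0
  have h₁ : x 1 ≠ x 0 := hne 1
  have h₂ : x 2 ≠ x 1 := hne 2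
  rw [card_insert_of_notMem (by simp [h₁.symm, h₀]), card_pair h₂.symm] at h
  omega

theorem IsWormColoring.chromaticNumber_le_colorsUsed_tripleGlue [Fintype V]
    (hG : G.Preconnected) {c : {p : Fin 3 × V × Bool // rep v₁ p = p} → ℕ}
    (hc : IsWormColoring (tripleGlue G v₁) c) : G.chromaticNumber ≤ colorsUsed c := by
  obtain ⟨hcopy, hglued⟩ := isWormColoring_tripleGlue_iff.1 hc
  obtain ⟨m, hm⟩ := exists_apply_eq_apply_sub_one_of_card_eq_two (x := c ∘ gluedVertex v₁) hglued
  have hlayers : (c ∘ copyVertex v₁ m) (v₁, false) = (c ∘ copyVertex v₁ m) (v₁, true) :=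
    hm.trans (congrArg c (copyVertex_top m).symm)
  exact ((hcopy m).chromaticNumber_le_colorsUsed_strongProdK2 hG hlayers).trans
    (by exact_mod_cast colorsUsed_comp_le c _)

variable (v₁) in
def glueColoring (d : Fin 3 → V × Bool → ℕ) (q : {p : Fin 3 × V × Bool // rep v₁ p = p}) : ℕ :=
  d q.1.1 q.1.2

theorem glueColoring_copyVertex {d : Fin 3 → V × Bool → ℕ}
    (hd : ∀ m, d m (v₁, true) = d (m - 1) (v₁, false)) (m : Fin 3) (a : V × Bool) :
    glueColoring v₁ d (copyVertex v₁ m a) = d m a := by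
  by_cases ha : a = (v₁, true)
  · subst ha
    simp [glueColoring, copyVertex, rep_top, hd]
  · simp [glueColoring, copyVertex, rep_of_ne ha]

theorem exists_isWormColoring_tripleGlue_colorsUsed_le [Fintype V] (htf : TriangleFree G)
    (v₁ : V) {k : ℕ} (hk : 2 ≤ k) (hG : G.Colorable k) :
    ∃ c, IsWormColoring (tripleGlue G v₁) c ∧ colorsUsed c ≤ k := by
  obtain ⟨C, hC⟩ := (colorable_iff_exists_bdd_nat_coloring k).1 hG
  obtain ⟨b, hb, hbk⟩ : ∃ b, b ≠ C v₁ ∧ b < k :=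
    ⟨if C v₁ = 0 then 1 else 0, by split_ifs <;> omega, by split_ifs <;> omega⟩
  let d : Fin 3 → V × Bool → ℕ := ![fun a => C a.1, fun a => cond a.2 (C v₁) b,
    fun a => cond a.2 b (C v₁)]
  have hd : ∀ m, d m (v₁, true) = d (m - 1) (v₁, false) := by
    intro m
    fin_cases m <;> rfl
  refine ⟨glueColoring v₁ d, isWormColoring_tripleGlue_iff.2 ⟨fun m => ?_, ?_⟩, ?_⟩
  · rw [show glueColoring v₁ d ∘ copyVertex v₁ m = d m from funext (glueColoring_copyVertex hd m)]
    fin_cases m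
    · exact isWormColoring_strongProdK2_comp_fst htf C
    · exact isWormColoring_strongProdK2_cond htf hb.symm
    · exact isWormColoring_strongProdK2_cond htf hb
  · simp [gluedVertex, glueColoring_copyVertex hd, d, card_pair hb]
  · have hdk (m : Fin 3) (a : V × Bool) : d m a < k := by
      obtain ⟨u, s⟩ := a
      fin_cases m <;> cases s <;> simp [d, hC, hbk]
    calc colorsUsed (glueColoring v₁ d) ≤ #(range k) := card_le_card fun x hx => by
          obtain ⟨q, -, rfl⟩ := mem_image.1 hx
          exact mem_range.2 (hdk _ _)
      _ = k := card_range k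

end Glue

end

/-- If `G` is connected, triangle-free, with chromatic number `k ≥ 3`, then the graph
`F` obtained from three disjoint copies of `G ⊠ K₂` by the cyclic identifications
`x¹₁ = y²₁`, `x²₁ = y³₁`, `x³₁ = y¹₁` is K₃-WORM colorable and its K₃-WORM lower
chromatic number equals `k`. -/
theorem tripleGlue_wormLower_eq {V : Type*} [Fintype V] [DecidableEq V]
    (G : SimpleGraph V) (v₁ : V) (k : ℕ) (hk : 3 ≤ k)
    (hconn : G.Connected) (htf : TriangleFree G)
    (hchi : G.chromaticNumber = (k : ℕ∞)) :
    (∃ c, IsWormColoring (tripleGlue G v₁) c) ∧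
    IsLeast (wormFeasible (tripleGlue G v₁)) k := by
  have hlower {c} (hc : IsWormColoring (tripleGlue G v₁) c) : k ≤ colorsUsed c := by
    have h := hc.chromaticNumber_le_colorsUsed_tripleGlue hconn.preconnected
    rw [hchi] at h
    exact_mod_cast h
  have hcol : G.Colorable k := chromaticNumber_le_iff_colorable.1 hchi.le
  obtain ⟨c, hc, hck⟩ := exists_isWormColoring_tripleGlue_colorsUsed_le htf v₁ (by omega) hcol
  refine ⟨⟨c, hc⟩, ⟨c, hc, le_antisymm hck (hlower hc)⟩, ?_⟩
  rintro s ⟨c', hc', rfl⟩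
  exact hlower hc'
end

section
/- The feasible sets of K₃-WORM colorable graphs may contain arbitrarily large gaps: for every integer k ≥ 4 there exists a finite K₃-WORM colorable graph H such that W^-(H) = 2, W^+(H) ≥ k, and H has no K₃-WORM coloring using exactly t colors for any t with 3 ≤ t ≤ k − 1. -/
open SimpleGraph

/-!
Let `G` be the shift graph on the pairs `i < j` of `{0, …, 2^(k-1) + 1}`, with
`(i, j) ~ (j, l)`, minus its isolated vertex: it is connected, triangle-free, and needs at least
`k` colours. Take `H = G ⊠ K₂`. As `G` is triangle-free, every triangle of `H` is a fibre
`{(u, 0), (u, 1)}` plus a vertex over a neighbour of `u`, and the fibres over an edge of `G` span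
a `K₄`. Hence in a K₃-WORM colouring of `H`, either some fibre is split, and then by connectivity
every fibre is split between the same two colours, or every fibre is monochromatic and the
colouring is a proper colouring of `G`. Both kinds occur, so the feasible set of `H` is `{2}`
together with the numbers of colours of proper colourings of `G`, all of which are at least `k`.
-/

open Finset

lemma card_triple_eq_two_iff (a b c : ℕ) :
    ({a, b, c} : Finset ℕ).card = 2 ↔ (a = b ∨ a = c ∨ b = c) ∧ ¬(a = b ∧ a = c) := by
  by_cases hab : a = b <;> by_cases hac : a = c <;> by_cases hbc : b = c <;>
    simp_all [card_insert_of_notMem]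

lemma colorsUsed_comp_of_surjective {V W : Type*} [Fintype V] [Fintype W] {g : W → V}
    (hg : Function.Surjective g) (c : V → ℕ) : colorsUsed (c ∘ g) = colorsUsed c := by
  classical
  rw [colorsUsed, colorsUsed, ← image_image, image_univ_of_surjective hg]

lemma IsWormColoring.comp_iso {V W : Type*} {G : SimpleGraph V} {H : SimpleGraph W}
    {c : W → ℕ} (hc : IsWormColoring H c) (e : G ≃g H) : IsWormColoring G (c ∘ e) :=
  fun _ _ _ huv huw hvw =>
    hc _ _ _ (e.map_adj_iff.2 huv) (e.map_adj_iff.2 huw) (e.map_adj_iff.2 hvw)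

lemma wormFeasible_eq_of_iso {V W : Type*} [Fintype V] [Fintype W] {G : SimpleGraph V}
    {H : SimpleGraph W} (e : G ≃g H) : wormFeasible H = wormFeasible G := by
  ext s
  constructor
  · rintro ⟨c, hc, rfl⟩
    exact ⟨c ∘ e, hc.comp_iso e, colorsUsed_comp_of_surjective e.surjective c⟩
  · rintro ⟨c, hc, rfl⟩
    exact ⟨c ∘ e.symm, hc.comp_iso e.symm, colorsUsed_comp_of_surjective e.symm.surjective c⟩

section StrongProduct

variable {V : Type*} {G : SimpleGraph V}

@[simp]
lemma strongProdK2_adj_s7 {p q : V × Bool} :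
    (strongProdK2 G).Adj p q ↔ (p.1 = q.1 ∧ p.2 ≠ q.2) ∨ G.Adj p.1 q.1 := by
  rw [strongProdK2, fromRel_adj]
  constructor
  · rintro ⟨-, (h | h) | h | h⟩
    exacts [Or.inl h, Or.inr h, Or.inl ⟨h.1.symm, h.2.symm⟩, Or.inr h.symm]
  · intro h
    refine ⟨?_, Or.inl h⟩
    rintro rfl
    simp at h

lemma exists_adj_of_strongProdK2_triangle (hG : TriangleFree G) (c : V × Bool → ℕ)
    {p q r : V × Bool} (hpq : (strongProdK2 G).Adj p q) (hpr : (strongProdK2 G).Adj p r)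
    (hqr : (strongProdK2 G).Adj q r) :
    ∃ u v b, G.Adj u v ∧
      ({c p, c q, c r} : Finset ℕ) = {c (u, false), c (u, true), c (v, b)} := by
  obtain ⟨a, i⟩ := p
  obtain ⟨b, j⟩ := q
  obtain ⟨d, l⟩ := r
  simp only [strongProdK2_adj_s7] at hpq hpr hqr
  rcases hpq with ⟨rfl, hij⟩ | hab
  · have had : G.Adj a d := by
      rcases hpr with ⟨rfl, hil⟩ | h
      · rcases hqr with ⟨-, hjl⟩ | h
        · cases i <;> cases j <;> cases l <;> simp_all
        · exact absurd h (G.loopless.irrefl _)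
      · exact h
    refine ⟨a, d, l, had, ?_⟩
    ext x
    cases i <;> cases j <;> simp_all
    tauto
  · rcases hpr with ⟨rfl, hil⟩ | had
    · refine ⟨a, b, j, hab, ?_⟩
      ext x
      cases i <;> cases l <;> simp_all <;> tauto
    · rcases hqr with ⟨rfl, hjl⟩ | hbd
      · refine ⟨b, a, i, hab.symm, ?_⟩
        ext x
        cases j <;> cases l <;> simp_all <;> tauto
      · exact (hG _ _ _ hab had hbd).elim

lemma isWormColoring_strongProdK2 (hG : TriangleFree G) {c : V × Bool → ℕ}
    (hc : ∀ u v b, G.Adj u v → ({c (u, false), c (u, true), c (v, b)} : Finset ℕ).card = 2) :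
    IsWormColoring (strongProdK2 G) c := by
  intro p q r hpq hpr hqr
  obtain ⟨u, v, b, huv, hcol⟩ := exists_adj_of_strongProdK2_triangle hG c hpq hpr hqr
  rw [hcol]
  exact hc u v b huv

-- The fibres over an edge of `G` span a `K₄`, each of whose four triangles gets two colours.
lemma IsWormColoring.strongProdK2_adj_cases {c : V × Bool → ℕ}
    (hc : IsWormColoring (strongProdK2 G) c) {u v : V} (huv : G.Adj u v) :
    (c (u, false) = c (u, true) ∧ c (v, false) = c (v, true) ∧
      c (u, false) ≠ c (v, false)) ∨
    (c (u, false) ≠ c (u, true) ∧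
      (c (v, false) = c (u, false) ∧ c (v, true) = c (u, true) ∨
        c (v, false) = c (u, true) ∧ c (v, true) = c (u, false))) := by
  have adj : ∀ i j, (strongProdK2 G).Adj (u, i) (v, j) := fun _ _ => by simp [huv]
  have hu : (strongProdK2 G).Adj (u, false) (u, true) := by simp
  have hv : (strongProdK2 G).Adj (v, false) (v, true) := by simp
  have t1 := hc _ _ _ hu (adj false false) (adj true false)
  have t2 := hc _ _ _ hu (adj false true) (adj true true)
  have t3 := hc _ _ _ (adj false false) (adj false true) hv
  have t4 := hc _ _ _ (adj true false) (adj true true) hv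
  rw [card_triple_eq_two_iff] at t1 t2 t3 t4
  omega

variable [Fintype V]

lemma two_mem_wormFeasible_strongProdK2 [Nonempty V] (hG : TriangleFree G) :
    2 ∈ wormFeasible (strongProdK2 G) := by
  refine ⟨Bool.toNat ∘ Prod.snd, isWormColoring_strongProdK2 hG fun u v b _ => ?_, ?_⟩
  · cases b <;> simp
  · rw [colorsUsed_comp_of_surjective Prod.snd_surjective]
    decide

lemma colorsUsed_mem_wormFeasible_strongProdK2 (hG : TriangleFree G) (f : G.Coloring ℕ) :
    colorsUsed f ∈ wormFeasible (strongProdK2 G) := by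
  refine ⟨f ∘ Prod.fst, isWormColoring_strongProdK2 hG fun u v b huv => ?_,
    colorsUsed_comp_of_surjective Prod.fst_surjective f⟩
  simp [f.valid huv]

lemma IsWormColoring.colorsUsed_eq_two_of_ne (hconn : G.Preconnected) {c : V × Bool → ℕ}
    (hc : IsWormColoring (strongProdK2 G) c) {u : V} (hu : c (u, false) ≠ c (u, true)) :
    colorsUsed c = 2 := by
  set A := c (u, false)
  set B := c (u, true)
  have fibre : ∀ v,
      c (v, false) = A ∧ c (v, true) = B ∨ c (v, false) = B ∧ c (v, true) = A := by
    intro v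
    induction (reachable_iff_reflTransGen u v).1 (hconn u v) with
    | refl => exact Or.inl ⟨rfl, rfl⟩
    | tail _ hwv ih => rcases hc.strongProdK2_adj_cases hwv with h | h <;> omega
  have : univ.image c = {A, B} := by
    ext x
    simp only [mem_image, mem_univ, true_and, mem_insert, mem_singleton]
    constructor
    · rintro ⟨⟨v, _ | _⟩, rfl⟩ <;> have := fibre v <;> omega
    · rintro (rfl | rfl)
      exacts [⟨(u, false), rfl⟩, ⟨(u, true), rfl⟩]
  rw [colorsUsed, this, card_pair hu]

lemma IsWormColoring.exists_coloring_of_forall_eq {c : V × Bool → ℕ}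
    (hc : IsWormColoring (strongProdK2 G) c) (h : ∀ v, c (v, false) = c (v, true)) :
    ∃ f : G.Coloring ℕ, colorsUsed f = colorsUsed c := by
  refine ⟨Coloring.mk (fun v => c (v, false)) fun huv => ?_, ?_⟩
  · rcases hc.strongProdK2_adj_cases huv with h' | h'
    exacts [h'.2.2, (h'.1 (h _)).elim]
  · have : c = (fun v => c (v, false)) ∘ Prod.fst := by
      funext ⟨v, b⟩
      cases b <;> simp [h]
    conv_rhs => rw [this]
    exact (colorsUsed_comp_of_surjective Prod.fst_surjective _).symm

theorem wormFeasible_strongProdK2 [Nonempty V] (hG : TriangleFree G) (hconn : G.Preconnected) :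
    wormFeasible (strongProdK2 G) = insert 2 {s | ∃ f : G.Coloring ℕ, colorsUsed f = s} := by
  ext s
  constructor
  · rintro ⟨c, hc, rfl⟩
    by_cases h : ∀ v, c (v, false) = c (v, true)
    · exact Or.inr (hc.exists_coloring_of_forall_eq h)
    · obtain ⟨u, hu⟩ := not_forall.1 h
      exact Or.inl (hc.colorsUsed_eq_two_of_ne hconn hu)
  · rintro (rfl | ⟨f, rfl⟩)
    exacts [two_mem_wormFeasible_strongProdK2 hG, colorsUsed_mem_wormFeasible_strongProdK2 hG f]

end StrongProduct

section ShiftGraph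

-- `(0, m - 1)` is the only isolated vertex of the shift graph on the pairs `i < j` of `Fin m`;
-- dropping it makes the graph connected.
abbrev ShiftVertex (m : ℕ) : Type :=
  {p : Fin m × Fin m // (p.1 : ℕ) < p.2 ∧ ¬((p.1 : ℕ) = 0 ∧ (p.2 : ℕ) = m - 1)}

def shiftGraph (m : ℕ) : SimpleGraph (ShiftVertex m) :=
  fromRel fun p q => (p.1.2 : ℕ) = q.1.1

variable {m : ℕ}

def shiftVertex (a b : ℕ) (hb : b < m) (hab : a < b) (hne : ¬(a = 0 ∧ b = m - 1)) :
    ShiftVertex m :=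
  ⟨(⟨a, hab.trans hb⟩, ⟨b, hb⟩), hab, hne⟩

lemma shiftGraph_adj {p q : ShiftVertex m} :
    (shiftGraph m).Adj p q ↔ (p.1.2 : ℕ) = q.1.1 ∨ (q.1.2 : ℕ) = p.1.1 := by
  simp only [shiftGraph, fromRel_adj, and_iff_right_iff_imp]
  rintro h rfl
  have := p.2.1
  omega

lemma shiftGraph_triangleFree (m : ℕ) : TriangleFree (shiftGraph m) := by
  intro u v w huv huw hvw
  simp only [shiftGraph_adj] at huv huw hvw
  have := u.2.1
  have := v.2.1
  have := w.2.1
  omega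

lemma shiftGraph_preconnected (hm : 3 ≤ m) : (shiftGraph m).Preconnected := by
  let hub : ShiftVertex m := shiftVertex 0 1 (by omega) one_pos (by omega)
  have reach_of_fst_eq_zero : ∀ b (hb : b < m - 1) (hb₀ : 0 < b),
      (shiftGraph m).Reachable (shiftVertex 0 b (by omega) hb₀ (by omega)) hub := by
    intro b hb hb₀
    obtain rfl | hb₁ := (Nat.one_le_iff_ne_zero.2 hb₀.ne').eq_or_lt
    · rfl
    have e₁ : (shiftGraph m).Adj (shiftVertex 0 b (by omega) hb₀ (by omega))
        (shiftVertex b (m - 1) (by omega) hb (by omega)) := shiftGraph_adj.2 (Or.inl rfl)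
    have e₂ : (shiftGraph m).Adj (shiftVertex b (m - 1) (by omega) hb (by omega))
        (shiftVertex 1 b (by omega) hb₁ (by omega)) := shiftGraph_adj.2 (Or.inr rfl)
    have e₃ : (shiftGraph m).Adj (shiftVertex 1 b (by omega) hb₁ (by omega)) hub :=
      shiftGraph_adj.2 (Or.inr rfl)
    exact e₁.reachable.trans (e₂.reachable.trans e₃.reachable)
  have reach_hub : ∀ v, (shiftGraph m).Reachable v hub := by
    rintro ⟨⟨⟨a, ha⟩, ⟨b, hb⟩⟩, hab, hne⟩
    dsimp only at hab hne
    obtain rfl | ha₀ := Nat.eq_zero_or_pos a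
    · exact reach_of_fst_eq_zero b (by omega) hab
    · have e : (shiftGraph m).Adj ⟨(⟨a, ha⟩, ⟨b, hb⟩), hab, hne⟩
          (shiftVertex 0 a ha ha₀ (by omega)) := shiftGraph_adj.2 (Or.inr rfl)
      exact e.reachable.trans (reach_of_fst_eq_zero a (by omega) ha₀)
  exact fun u v => (reach_hub u).trans (reach_hub v).symm

/-- The sets of colours on the vertices `(i, _)`, `i < m - 1`, are pairwise distinct, since the
colour of `(i, j)` occurs at `i` but, `(i, j)` being adjacent to every `(j, _)`, not at `j`. -/
lemma le_two_pow_colorsUsed_add_one (f : (shiftGraph m).Coloring ℕ) :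
    m ≤ 2 ^ colorsUsed f + 1 := by
  let S : ℕ → Finset ℕ := fun i =>
    (univ.filter fun v : ShiftVertex m => (v.1.1 : ℕ) = i).image f
  have separated : ∀ i j, i < j → j < m - 1 → S i ≠ S j := by
    intro i j hij hj hS
    let v : ShiftVertex m := shiftVertex i j (by omega) hij (by omega)
    have : f v ∈ S j := hS ▸ mem_image_of_mem f (by simp [v, shiftVertex])
    obtain ⟨w, hw, hfw⟩ := mem_image.1 this
    exact f.valid (shiftGraph_adj.2 (Or.inl (mem_filter.1 hw).2.symm)) hfw.symm
  have hcard := card_le_card_of_injOn S (s := range (m - 1)) (t := (univ.image f).powerset)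
    (fun i _ => by simp [S])
    (fun i hi j hj hS => by
      simp only [coe_range, Set.mem_Iio] at hi hj
      rcases lt_trichotomy i j with h | h | h
      exacts [(separated i j h hj hS).elim, h, (separated j i h hi hS.symm).elim])
  rw [card_range, card_powerset] at hcard
  rw [colorsUsed]
  omega

lemma lt_colorsUsed_of_shiftGraph {n : ℕ} (f : (shiftGraph (2 ^ n + 2)).Coloring ℕ) :
    n < colorsUsed f := by
  have := le_two_pow_colorsUsed_add_one f
  exact (Nat.pow_lt_pow_iff_right one_lt_two).1 (by omega)

end ShiftGraph

/-- Feasible sets of K₃-WORM colorable graphs may contain arbitrarily large gaps: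
for every `k ≥ 4` there is a finite K₃-WORM colorable graph `H` with
`W⁻(H) = 2`, `W⁺(H) ≥ k`, and no K₃-WORM coloring with exactly `t` colors
for any `3 ≤ t ≤ k - 1`. -/
theorem exists_worm_spectrum_with_large_gap {k : ℕ} (hk : 4 ≤ k) :
    ∃ (n : ℕ) (G : SimpleGraph (Fin n)),
      IsLeast (wormFeasible G) 2 ∧
      (∃ s ∈ wormFeasible G, k ≤ s) ∧
      (∀ t : ℕ, 3 ≤ t → t ≤ k - 1 → t ∉ wormFeasible G) := by
  have hm : 3 ≤ 2 ^ (k - 1) + 2 := by have := @Nat.one_le_two_pow (k - 1); omega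
  let G := shiftGraph (2 ^ (k - 1) + 2)
  have : Nonempty (ShiftVertex (2 ^ (k - 1) + 2)) :=
    ⟨shiftVertex 0 1 (by omega) one_pos (by omega)⟩
  have hfeas := wormFeasible_strongProdK2 (shiftGraph_triangleFree _) (shiftGraph_preconnected hm)
  have hlarge : ∀ f : G.Coloring ℕ, k ≤ colorsUsed f := fun f => by
    have := lt_colorsUsed_of_shiftGraph f
    omega
  obtain ⟨f, -⟩ := (colorable_iff_exists_bdd_nat_coloring _).1 (colorable_of_fintype G)
  refine ⟨_, (strongProdK2 G).overFin rfl, ?_, ?_, ?_⟩ <;>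
    rw [wormFeasible_eq_of_iso ((strongProdK2 G).overFinIso rfl), hfeas]
  · refine ⟨Set.mem_insert _ _, ?_⟩
    rintro s (rfl | ⟨f, rfl⟩)
    exacts [le_rfl, by have := hlarge f; omega]
  · exact ⟨_, Or.inr ⟨f, rfl⟩, hlarge f⟩
  · rintro t h3 htk (rfl | ⟨f, rfl⟩)
    exacts [by omega, by have := hlarge f; omega]
end
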